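/- Let F_2 be the field with two elements. The subgroup R of AGL_3(F_2) generated by the two matrices I_4 + E_{1,2} + E_{2,3} + E_{3,4} and I_4 + E_{1,4} + E_{2,3} + E_{2,4} is a regular subgroup such that R ∩ Tr = {I_4}. -/

import Mathlib

/-!
Conjugation by `B` inverts `A` (`B A B⁻¹ = A³ = A⁻¹`), so `⟨A, B⟩` is the dihedral group of
order 8 whose elements are `Aⁱ Bʲ` with `i < 4`, `j < 2`. Running through these eight matrices
shows that they are affine, that their first rows are the eight vectors `(1, v)` with
`v ∈ 𝔽₂³`, each exactly once, and that only the identity has linear part `I₃`.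
-/

open Matrix

/-- `M` lies in the affine group `AGL_n(F) ≤ GL_{n+1}(F)`:
it has block form `(1 v; 0 A)`, i.e. entry `(0,0)` equals `1` and the rest of
the first column is `0`. -/
def IsAffine {F : Type*} [Field F] {n : ℕ} (M : GL (Fin (n + 1)) F) : Prop :=
  (M : Matrix (Fin (n + 1)) (Fin (n + 1)) F) 0 0 = 1 ∧
    ∀ i : Fin (n + 1), i ≠ 0 → (M : Matrix (Fin (n + 1)) (Fin (n + 1)) F) i 0 = 0

/-- `M` is a translation: it is affine with linear part `A = I_n`,
i.e. all rows other than the first agree with the identity matrix. -/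
def IsTranslation {F : Type*} [Field F] {n : ℕ} (M : GL (Fin (n + 1)) F) : Prop :=
  IsAffine M ∧ ∀ i j : Fin (n + 1), i ≠ 0 →
    (M : Matrix (Fin (n + 1)) (Fin (n + 1)) F) i j = if i = j then 1 else 0

/-- `R` is a regular subgroup of `AGL_n(F)`: all its elements are affine and for
every `v ∈ F^n` there is exactly one element of `R` with first row `(1, v)`. -/
def IsRegularAffine {F : Type*} [Field F] {n : ℕ} (R : Subgroup (GL (Fin (n + 1)) F)) : Prop :=
  (∀ M ∈ R, IsAffine M) ∧
    ∀ v : Fin n → F, ∃! M : GL (Fin (n + 1)) F, M ∈ R ∧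
      ∀ j : Fin n, (M : Matrix (Fin (n + 1)) (Fin (n + 1)) F) 0 j.succ = v j

/-- `M ∈ GL_{n+1}(F)` is unipotent: `(M - I)^{n+1} = 0`. -/
def IsUnipotent {F : Type*} [Field F] {n : ℕ} (M : GL (Fin (n + 1)) F) : Prop :=
  ((M : Matrix (Fin (n + 1)) (Fin (n + 1)) F) - 1) ^ (n + 1) = 0

/-- The matrix `I_4 + E_{1,2} + E_{2,3} + E_{3,4}` over `𝔽₂` (0-based indices). -/
def matA : Matrix (Fin (3 + 1)) (Fin (3 + 1)) (ZMod 2) :=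
  1 + Matrix.single 0 1 1 + Matrix.single 1 2 1 + Matrix.single 2 3 1

/-- The matrix `I_4 + E_{1,4} + E_{2,3} + E_{2,4}` over `𝔽₂` (0-based indices). -/
def matB : Matrix (Fin (3 + 1)) (Fin (3 + 1)) (ZMod 2) :=
  1 + Matrix.single 0 3 1 + Matrix.single 1 2 1 + Matrix.single 1 3 1

section DihedralClosure

open Subgroup

variable {G : Type*} [Group G] {a b x : G}

lemma exists_pow_lt_eq_of_mem_zpowers {m : ℕ} (hm : 0 < m) (ha : a ^ m = 1)
    (hx : x ∈ zpowers a) : ∃ i < m, a ^ i = x := by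
  have hfin : IsOfFinOrder a := isOfFinOrder_iff_pow_eq_one.2 ⟨m, hm, ha⟩
  obtain ⟨k, rfl⟩ := hfin.mem_powers_iff_mem_zpowers.2 hx
  exact ⟨k % orderOf a,
    (Nat.mod_lt _ hfin.orderOf_pos).trans_le (orderOf_le_of_pow_eq_one hm ha),
    pow_mod_orderOf a k⟩

lemma mem_normalizer_zpowers_of_conj_eq_inv (hab : b * a * b⁻¹ = a⁻¹) :
    b ∈ normalizer (zpowers a) := by
  have conj_zpow_eq (k : ℤ) : b * a ^ k * b⁻¹ = a ^ (-k) := by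
    rw [← conj_zpow, hab, _root_.inv_zpow']
  refine mem_normalizer_iff.2 fun h => ⟨?_, ?_⟩
  · rintro ⟨k, rfl⟩
    exact ⟨-k, (conj_zpow_eq k).symm⟩
  · rintro ⟨k, hk⟩
    refine ⟨-k, mul_right_cancel (b := b⁻¹) (mul_left_cancel (a := b) ?_)⟩
    rw [← mul_assoc, conj_zpow_eq, neg_neg]
    exact hk.trans (mul_assoc _ _ _)

lemma exists_pow_mul_pow_of_mem_closure_pair (hab : b * a * b⁻¹ = a⁻¹) {m n : ℕ}
    (hm : 0 < m) (ha : a ^ m = 1) (hn : 0 < n) (hb : b ^ n = 1)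
    (hx : x ∈ closure {a, b}) : ∃ i < m, ∃ j < n, a ^ i * b ^ j = x := by
  have hx' : x ∈ (↑(zpowers a ⊔ zpowers b) : Set G) := by
    rwa [zpowers_eq_closure, zpowers_eq_closure, ← Subgroup.closure_union,
      ← Set.insert_eq]
  rw [coe_mul_of_right_le_normalizer_left _ _
    (zpowers_le.2 (mem_normalizer_zpowers_of_conj_eq_inv hab))] at hx'
  obtain ⟨y, hy, z, hz, rfl⟩ := hx'
  obtain ⟨i, hi, rfl⟩ := exists_pow_lt_eq_of_mem_zpowers hm ha hy
  obtain ⟨j, hj, rfl⟩ := exists_pow_lt_eq_of_mem_zpowers hn hb hz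
  exact ⟨i, hi, j, hj, rfl⟩

end DihedralClosure

def matAUnit : GL (Fin (3 + 1)) (ZMod 2) := ⟨matA, matA ^ 3, by decide, by decide⟩

def matBUnit : GL (Fin (3 + 1)) (ZMod 2) := ⟨matB, matB, by decide, by decide⟩

lemma setOf_val_eq_matA_or_matB : {x : GL (Fin (3 + 1)) (ZMod 2) |
    (x : Matrix (Fin (3 + 1)) (Fin (3 + 1)) (ZMod 2)) = matA ∨
    (x : Matrix (Fin (3 + 1)) (Fin (3 + 1)) (ZMod 2)) = matB} = {matAUnit, matBUnit} :=
  Set.ext fun x => (or_congr (Units.ext_iff (u := x) (v := matAUnit))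
    (Units.ext_iff (u := x) (v := matBUnit))).symm

lemma matAUnit_pow_four : matAUnit ^ 4 = 1 := Units.ext <| by decide

lemma matBUnit_sq : matBUnit ^ 2 = 1 := Units.ext <| by decide

lemma matBUnit_conj_matAUnit : matBUnit * matAUnit * matBUnit⁻¹ = matAUnit⁻¹ :=
  Units.ext <| by decide

lemma exists_pow_mul_pow_of_mem_closure {M : GL (Fin (3 + 1)) (ZMod 2)}
    (hM : M ∈ Subgroup.closure {matAUnit, matBUnit}) :
    ∃ i < 4, ∃ j < 2, matAUnit ^ i * matBUnit ^ j = M :=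
  exists_pow_mul_pow_of_mem_closure_pair matBUnit_conj_matAUnit four_pos matAUnit_pow_four
    two_pos matBUnit_sq hM

lemma pow_mul_pow_mem_closure (i j : ℕ) :
    matAUnit ^ i * matBUnit ^ j ∈ Subgroup.closure {matAUnit, matBUnit} :=
  mul_mem (pow_mem (Subgroup.subset_closure (Set.mem_insert _ _)) i)
    (pow_mem (Subgroup.subset_closure (Set.mem_insert_of_mem _ (Set.mem_singleton _))) j)

lemma isAffine_pow_mul_pow : ∀ i < 4, ∀ j < 2, IsAffine (matAUnit ^ i * matBUnit ^ j) := by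
  unfold IsAffine
  decide

lemma exists_pow_mul_pow_row_zero_eq : ∀ v : Fin 3 → ZMod 2, ∃ i < 4, ∃ j < 2,
    ∀ k : Fin 3, (matAUnit ^ i * matBUnit ^ j).val 0 k.succ = v k := by
  decide

-- The four nested bounded quantifiers exceed the default size of the `Decidable` instance search.
set_option synthInstance.maxSize 256 in
lemma pow_mul_pow_eq_of_row_zero_eq : ∀ i < 4, ∀ j < 2, ∀ i' < 4, ∀ j' < 2,
    (∀ k : Fin 3, (matAUnit ^ i * matBUnit ^ j).val 0 k.succ =
      (matAUnit ^ i' * matBUnit ^ j').val 0 k.succ) →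
    (matAUnit ^ i * matBUnit ^ j).val = (matAUnit ^ i' * matBUnit ^ j').val := by
  decide

lemma pow_mul_pow_val_eq_one_of_isTranslation : ∀ i < 4, ∀ j < 2,
    IsTranslation (matAUnit ^ i * matBUnit ^ j) → (matAUnit ^ i * matBUnit ^ j).val = 1 := by
  unfold IsTranslation IsAffine
  decide

theorem closure_matA_matB_regular_no_translations :
    IsRegularAffine (Subgroup.closure {x : GL (Fin (3 + 1)) (ZMod 2) |
        (x : Matrix (Fin (3 + 1)) (Fin (3 + 1)) (ZMod 2)) = matA ∨
        (x : Matrix (Fin (3 + 1)) (Fin (3 + 1)) (ZMod 2)) = matB}) ∧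
      ∀ M ∈ Subgroup.closure {x : GL (Fin (3 + 1)) (ZMod 2) |
          (x : Matrix (Fin (3 + 1)) (Fin (3 + 1)) (ZMod 2)) = matA ∨
          (x : Matrix (Fin (3 + 1)) (Fin (3 + 1)) (ZMod 2)) = matB},
        IsTranslation M → M = 1 := by
  rw [setOf_val_eq_matA_or_matB]
  refine ⟨⟨fun M hM => ?affine, fun v => ?regular⟩, fun M hM hT => ?translation⟩
  case affine =>
    obtain ⟨i, hi, j, hj, rfl⟩ := exists_pow_mul_pow_of_mem_closure hM
    exact isAffine_pow_mul_pow i hi j hj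
  case regular =>
    obtain ⟨i, hi, j, hj, hv⟩ := exists_pow_mul_pow_row_zero_eq v
    refine ⟨_, ⟨pow_mul_pow_mem_closure i j, hv⟩, fun N ⟨hN, hNv⟩ => ?_⟩
    obtain ⟨i', hi', j', hj', rfl⟩ := exists_pow_mul_pow_of_mem_closure hN
    exact Units.ext <| pow_mul_pow_eq_of_row_zero_eq i' hi' j' hj' i hi j hj
      fun k => (hNv k).trans (hv k).symm
  case translation =>
    obtain ⟨i, hi, j, hj, rfl⟩ := exists_pow_mul_pow_of_mem_closure hM
    exact Units.ext <| pow_mul_pow_val_eq_one_of_isTranslation i hi j hj hT
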